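/- arXiv:1509.00206 — 2 statements merged into one kernel-verified Lean document; each statement's English description precedes it below -/
import Mathlib

section
/- A real symmetric tridiagonal matrix whose subdiagonal entries are all nonzero has pairwise distinct eigenvalues. -/
open Matrix Polynomial

private theorem jacobi_ker (n : ℕ) (T : Matrix (Fin n) (Fin n) ℝ)
    (htri : ∀ i j : Fin n, (i : ℕ) + 1 < (j : ℕ) → T i j = 0)
    (hsub : ∀ i j : Fin n, (i : ℕ) + 1 = (j : ℕ) → T i j ≠ 0)
    (μ : ℝ) (v : Fin n → ℝ) (hv : T.mulVec v = μ • v)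
    (hn : 0 < n) (h0 : v ⟨0, hn⟩ = 0) : v = 0 := by
  have key : ∀ k : ℕ, ∀ hk : k < n, v ⟨k, hk⟩ = 0 := by
    intro k
    induction k using Nat.strong_induction_on with
    | _ k ih =>
      intro hk
      match k, hk with
      | 0, hk => exact h0
      | (k+1), hk =>
        have hkn : k < n := Nat.lt_of_succ_lt hk
        have hrow := congrFun hv ⟨k, hkn⟩
        have hsum : (T.mulVec v) ⟨k, hkn⟩ = T ⟨k, hkn⟩ ⟨k+1, hk⟩ * v ⟨k+1, hk⟩ := by
          rw [mulVec, dotProduct]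
          apply Finset.sum_eq_single
          · intro j _ hj
            rcases lt_trichotomy (j : ℕ) (k+1) with h | h | h
            · have : v j = 0 := by
                have := ih j (by omega) j.isLt
                simpa [Fin.eta] using this
              simp [this]
            · exact absurd (Fin.ext h : j = ⟨k+1, hk⟩) hj
            · rw [htri _ _ (by simpa using h), zero_mul]
          · intro h; exact absurd (Finset.mem_univ _) h
        have hvk : v ⟨k, hkn⟩ = 0 := by
          have := ih k (by omega) hkn
          simpa using this
        rw [hsum] at hrow
        have : T ⟨k, hkn⟩ ⟨k+1, hk⟩ * v ⟨k+1, hk⟩ = 0 := by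
          rw [hrow, Pi.smul_apply, hvk, smul_eq_mul, mul_zero]
        exact (mul_eq_zero.mp this).resolve_left (hsub _ _ rfl)
  funext j
  exact (by simpa [Fin.eta] using key j j.isLt : v j = 0)

private theorem charpoly_of_isHermitian (n : ℕ) (T : Matrix (Fin n) (Fin n) ℝ)
    (hA : T.IsHermitian) :
    T.charpoly = ∏ i : Fin n, (X - C (hA.eigenvalues i)) := by
  have hb : T.charpoly = (T.toEuclideanLin).charpoly := by
    rw [toEuclideanLin_eq_toLin]
    conv_lhs => rw [← LinearMap.toMatrix_toLin (PiLp.basisFun 2 ℝ (Fin n))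
      (PiLp.basisFun 2 ℝ (Fin n)) T]
    exact LinearMap.charpoly_toMatrix _ _
  have hd : LinearMap.toMatrix hA.eigenvectorBasis.toBasis hA.eigenvectorBasis.toBasis
      T.toEuclideanLin = diagonal hA.eigenvalues := by
    ext i j
    rw [LinearMap.toMatrix_apply]
    have : T.toEuclideanLin (hA.eigenvectorBasis.toBasis j)
        = hA.eigenvalues j • (hA.eigenvectorBasis.toBasis j) := by
      have := hA.mulVec_eigenvectorBasis j
      apply (WithLp.equiv 2 _).injective
      simpa [toEuclideanLin_apply] using this
    rw [this, _root_.map_smul, Module.Basis.repr_self, Finsupp.smul_apply, Finsupp.single_apply]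
    by_cases h : i = j
    · simp [h, diagonal]
    · rw [diagonal_apply_ne _ h, if_neg (fun hji => h hji.symm), smul_zero]
  have : (diagonal hA.eigenvalues).charpoly = T.charpoly := by
    rw [hb, ← hd]
    exact LinearMap.charpoly_toMatrix _ _
  rw [← this, charpoly]
  have hcm : (diagonal hA.eigenvalues).charmatrix
      = diagonal (fun i => X - C (hA.eigenvalues i)) := by
    ext i j
    by_cases h : i = j
    · subst h; simp [charmatrix_apply_eq]
    · rw [charmatrix_apply_ne _ _ _ h, diagonal_apply_ne _ h, diagonal_apply_ne _ h]; simp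
  rw [hcm, det_diagonal]

/-- A real symmetric tridiagonal matrix whose subdiagonal entries are all nonzero
(a normal Jacobi matrix) has pairwise distinct eigenvalues. -/
theorem jacobi_matrix_simple_spectrum (n : ℕ) (T : Matrix (Fin n) (Fin n) ℝ)
    (hsym : Tᵀ = T)
    (htri : ∀ i j : Fin n, (i : ℕ) + 1 < (j : ℕ) → T i j = 0)
    (hsub : ∀ i j : Fin n, (i : ℕ) + 1 = (j : ℕ) → T i j ≠ 0) :
    T.charpoly.roots.Nodup := by
  have hA : T.IsHermitian := by
    ext i j
    simpa [conjTranspose_apply] using congrFun (congrFun hsym i) j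
  have hinj : Function.Injective hA.eigenvalues := by
    intro i j hij
    by_contra hne
    have hn : 0 < n := i.pos
    have hu := hA.mulVec_eigenvectorBasis i
    have hw := hA.mulVec_eigenvectorBasis j
    rw [hij] at hu
    set u : Fin n → ℝ := ⇑(hA.eigenvectorBasis i) with hu_def
    set w : Fin n → ℝ := ⇑(hA.eigenvectorBasis j) with hw_def
    have hu0 : u ⟨0, hn⟩ ≠ 0 := by
      intro h
      have hz := jacobi_ker n T htri hsub _ u hu hn h
      exact hA.eigenvectorBasis.orthonormal.ne_zero i (by ext k; simpa [hu_def] using congrFun hz k)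
    have hw0 : w ⟨0, hn⟩ ≠ 0 := by
      intro h
      have hz := jacobi_ker n T htri hsub _ w hw hn h
      exact hA.eigenvectorBasis.orthonormal.ne_zero j (by ext k; simpa [hw_def] using congrFun hz k)
    set z : Fin n → ℝ := w ⟨0, hn⟩ • u - u ⟨0, hn⟩ • w with hz_def
    have hz : T.mulVec z = hA.eigenvalues j • z := by
      rw [hz_def, mulVec_sub, mulVec_smul, mulVec_smul, hu, hw,
        smul_sub, smul_comm, smul_comm (u ⟨0, hn⟩)]
    have z0 : z ⟨0, hn⟩ = 0 := by
      simp only [hz_def, Pi.sub_apply, Pi.smul_apply, smul_eq_mul]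
      ring
    have hz0 := jacobi_ker n T htri hsub _ z hz hn z0
    have heq : w ⟨0, hn⟩ • u = u ⟨0, hn⟩ • w := sub_eq_zero.mp hz0
    have heq2 : w ⟨0, hn⟩ • hA.eigenvectorBasis i = u ⟨0, hn⟩ • hA.eigenvectorBasis j := by
      ext k; simpa [hu_def, hw_def] using congrFun heq k
    have horth := hA.eigenvectorBasis.orthonormal
    have := congrArg (fun x => (inner ℝ (hA.eigenvectorBasis i) x : ℝ)) heq2
    simp only [inner_smul_right, horth.2 hne, real_inner_self_eq_norm_sq,
      horth.1 i, mul_zero, one_pow, mul_one] at this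
    exact hw0 this
  rw [charpoly_of_isHermitian n T hA, Finset.prod_eq_multiset_prod]
  have hmm : Multiset.map (fun i => X - C (hA.eigenvalues i)) Finset.univ.val
      = Multiset.map (fun a => X - C a) (Finset.univ.val.map hA.eigenvalues) := by
    rw [Multiset.map_map]; rfl
  rw [hmm, roots_multiset_prod_X_sub_C]
  exact Finset.univ.nodup.map hinj
end

section
/- Suppose A = UΣV' is the SVD of an M×N real matrix, with singular values partitioned into Σ_α (those in (1-τ, 1]), Σ_β (those in (τ, 1-τ]), and Σ_γ (those in [0, τ]), with corresponding singular vector blocks. Then for any b ∈ ℝ^M, writing b_β = U_β U_β' b and x_β = V_β Σ_β^{-1} U_β' b_β, the vector x := x_β + A'(b - A x_β) satisfies ‖A x - b‖ ≤ ‖b_γ‖ + τ·(2+τ)‖b_α‖ where b_α = U_α U_α' b and b_γ = U_γ U_γ' b. -/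
open Matrix

set_option maxHeartbeats 1000000 in
/-- Accuracy of the two-stage Fourier-extension solver: with the SVD `A = UΣV'`,
singular values partitioned into `α = (1-τ,1]`, `β = (τ,1-τ]`, `γ = [0,τ]`, the
vector `x = x_β + A'(b - A x_β)`, where `x_β = V_β Σ_β⁻¹ U_β' b_β`, satisfies
`‖Ax - b‖ ≤ ‖b_γ‖ + τ(2+τ)‖b_α‖`. -/
theorem two_stage_solver_accuracy (M N : ℕ) (hMN : N ≤ M)
    (τ : ℝ) (hτ : 0 < τ) (hτ' : τ < 1 / 2)
    (U : Matrix (Fin M) (Fin M) ℝ) (hU : U * Uᵀ = 1 ∧ Uᵀ * U = 1)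
    (V : Matrix (Fin N) (Fin N) ℝ) (hV : V * Vᵀ = 1 ∧ Vᵀ * V = 1)
    (σ : Fin M → ℝ) (hσ : ∀ i, 0 ≤ σ i ∧ σ i ≤ 1)
    (hσz : ∀ i : Fin M, N ≤ (i : ℕ) → σ i = 0)
    (S : Matrix (Fin M) (Fin N) ℝ)
    (hS : ∀ i j, S i j = if (i : ℕ) = (j : ℕ) then σ i else 0)
    (A : Matrix (Fin M) (Fin N) ℝ) (hA : A = U * S * Vᵀ)
    (b : Fin M → ℝ)
    (bα bβ bγ : Fin M → ℝ)
    (hbα : bα = (U * Matrix.diagonal (fun i => if 1 - τ < σ i then (1:ℝ) else 0) * Uᵀ).mulVec b)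
    (hbβ : bβ = (U * Matrix.diagonal (fun i => if τ < σ i ∧ σ i ≤ 1 - τ then (1:ℝ) else 0) * Uᵀ).mulVec b)
    (hbγ : bγ = (U * Matrix.diagonal (fun i => if σ i ≤ τ then (1:ℝ) else 0) * Uᵀ).mulVec b)
    (Xβ : Matrix (Fin N) (Fin M) ℝ)
    (hXβ : ∀ j i, Xβ j i =
      if (j : ℕ) = (i : ℕ) ∧ τ < σ i ∧ σ i ≤ 1 - τ then (σ i)⁻¹ else 0)
    (xβ : Fin N → ℝ) (hxβ : xβ = (V * Xβ * Uᵀ).mulVec bβ)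
    (x : Fin N → ℝ) (hx : x = xβ + Aᵀ.mulVec (b - A.mulVec xβ)) :
    Real.sqrt ((A.mulVec x - b) ⬝ᵥ (A.mulVec x - b)) ≤
      Real.sqrt (bγ ⬝ᵥ bγ) + τ * (2 + τ) * Real.sqrt (bα ⬝ᵥ bα) := by
  obtain ⟨hU1, hU2⟩ := hU
  obtain ⟨hV1, hV2⟩ := hV
  set pα : Fin M → ℝ := fun i => if 1 - τ < σ i then (1:ℝ) else 0 with hpα
  set pβ : Fin M → ℝ := fun i => if τ < σ i ∧ σ i ≤ 1 - τ then (1:ℝ) else 0 with hpβ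
  set pγ : Fin M → ℝ := fun i => if σ i ≤ τ then (1:ℝ) else 0 with hpγ
  set c : Fin M → ℝ := Uᵀ.mulVec b with hc
  have key : ∀ d : Fin M → ℝ, (U * Matrix.diagonal d * Uᵀ).mulVec b
      = U.mulVec (fun i => d i * c i) := by
    intro d
    rw [← Matrix.mulVec_mulVec, ← Matrix.mulVec_mulVec]
    exact congrArg (U.mulVec) (funext fun i => Matrix.mulVec_diagonal _ _ i)
  have key2 : ∀ (d w : Fin M → ℝ), (U * Matrix.diagonal d * Uᵀ).mulVec (U.mulVec w)
      = U.mulVec (fun i => d i * w i) := by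
    intro d w
    rw [Matrix.mulVec_mulVec]
    have : U * Matrix.diagonal d * Uᵀ * U = U * Matrix.diagonal d := by
      rw [Matrix.mul_assoc (U * Matrix.diagonal d), hU2, Matrix.mul_one]
    rw [this, ← Matrix.mulVec_mulVec]
    exact congrArg (U.mulVec) (funext fun i => Matrix.mulVec_diagonal _ _ i)
  have dotU : ∀ w : Fin M → ℝ, (U.mulVec w) ⬝ᵥ (U.mulVec w) = w ⬝ᵥ w := by
    intro w
    have h1 : U.mulVec w = Matrix.vecMul w Uᵀ := by
      rw [Matrix.vecMul_transpose]
    rw [Matrix.dotProduct_mulVec, h1, Matrix.vecMul_vecMul, hU2, Matrix.vecMul_one]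
  have hb' : U.mulVec c = b := by
    rw [hc, Matrix.mulVec_mulVec, hU1, Matrix.one_mulVec]
  -- S * Xβ = diagonal pβ
  have hSX : S * Xβ = Matrix.diagonal pβ := by
    ext i k
    simp only [Matrix.mul_apply, hS, hXβ, Matrix.diagonal_apply]
    by_cases hik : i = k
    · subst hik
      by_cases hiN : (i:ℕ) < N
      · rw [Finset.sum_eq_single (⟨(i:ℕ), hiN⟩ : Fin N)]
        · by_cases hβ : τ < σ i ∧ σ i ≤ 1 - τ
          · have hne : σ i ≠ 0 := ne_of_gt (lt_trans hτ hβ.1)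
            simp [hβ, hne, hpβ]
          · simp [hβ, hpβ]
        · intro j _ hj
          have : (i:ℕ) ≠ (j:ℕ) := by
            intro h; apply hj; exact Fin.ext h.symm
          simp [this]
        · intro h; exact absurd (Finset.mem_univ _) h
      · push_neg at hiN
        have hσ0 : σ i = 0 := hσz i hiN
        have hβ : ¬ (τ < σ i ∧ σ i ≤ 1 - τ) := by
          rw [hσ0]; intro h; exact absurd h.1 (not_lt.mpr (le_of_lt hτ))
        rw [Finset.sum_eq_zero]
        · simp [hβ, hpβ]
        · intro j _
          have : (i:ℕ) ≠ (j:ℕ) := by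
            have := j.isLt; omega
          simp [this]
    · have hik' : (i:ℕ) ≠ (k:ℕ) := fun h => hik (Fin.ext h)
      rw [Finset.sum_eq_zero, if_neg hik]
      intro j _
      by_cases h1 : (i:ℕ) = (j:ℕ)
      · have : ¬ ((j:ℕ) = (k:ℕ) ∧ τ < σ k ∧ σ k ≤ 1 - τ) := by
          intro h; exact hik' (h1.trans h.1)
        simp [this]
      · simp [h1]
  -- S * Sᵀ = diagonal σ²
  have hSS : S * Sᵀ = Matrix.diagonal (fun i => σ i * σ i) := by
    ext i k
    simp only [Matrix.mul_apply, Matrix.transpose_apply, hS, Matrix.diagonal_apply]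
    by_cases hik : i = k
    · subst hik
      by_cases hiN : (i:ℕ) < N
      · rw [Finset.sum_eq_single (⟨(i:ℕ), hiN⟩ : Fin N)]
        · simp
        · intro j _ hj
          have : (i:ℕ) ≠ (j:ℕ) := by
            intro h; apply hj; exact Fin.ext h.symm
          simp [this]
        · intro h; exact absurd (Finset.mem_univ _) h
      · push_neg at hiN
        have hσ0 : σ i = 0 := hσz i hiN
        rw [Finset.sum_eq_zero]
        · simp [hσ0]
        · intro j _
          have : (i:ℕ) ≠ (j:ℕ) := by
            have := j.isLt; omega
          simp [this]
    · have hik' : (i:ℕ) ≠ (k:ℕ) := fun h => hik (Fin.ext h)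
      rw [Finset.sum_eq_zero, if_neg hik]
      intro j _
      by_cases h1 : (i:ℕ) = (j:ℕ)
      · have h2 : (k:ℕ) ≠ (j:ℕ) := fun h => hik' (h1.trans h.symm)
        simp [h2]
      · simp [h1]
  have hbβ' : bβ = U.mulVec (fun i => pβ i * c i) := by rw [hbβ, key]
  have hbα' : bα = U.mulVec (fun i => pα i * c i) := by rw [hbα, key]
  have hbγ' : bγ = U.mulVec (fun i => pγ i * c i) := by rw [hbγ, key]
  -- A xβ = bβ
  have hAxβ : A.mulVec xβ = bβ := by
    rw [hxβ, Matrix.mulVec_mulVec, hA]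
    have hcomb : U * S * Vᵀ * (V * Xβ * Uᵀ) = U * Matrix.diagonal pβ * Uᵀ := by
      rw [← hSX]
      simp only [Matrix.mul_assoc]
      rw [← Matrix.mul_assoc Vᵀ V, hV2, Matrix.one_mul]
    rw [hcomb, hbβ', key2]
    exact congrArg U.mulVec (funext fun i => by
      by_cases h : τ < σ i ∧ σ i ≤ 1 - τ <;> simp [hpβ, h])
  -- main identity
  have hmain : A.mulVec x - b
      = U.mulVec (fun i => (σ i * σ i - 1) * (1 - pβ i) * c i) := by
    have hAAt : A * Aᵀ = U * Matrix.diagonal (fun i => σ i * σ i) * Uᵀ := by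
      rw [hA, ← hSS]
      simp only [Matrix.transpose_mul, Matrix.transpose_transpose, Matrix.mul_assoc]
      rw [← Matrix.mul_assoc Vᵀ V, hV2, Matrix.one_mul]
    have hbmb : b - A.mulVec xβ = U.mulVec (fun i => (1 - pβ i) * c i) := by
      rw [hAxβ, hbβ']
      nth_rewrite 1 [← hb']
      rw [← Matrix.mulVec_sub]
      exact congrArg U.mulVec (funext fun i => by
        simp only [Pi.sub_apply]; ring)
    rw [hx, Matrix.mulVec_add, Matrix.mulVec_mulVec, hAAt, hbmb, key2, hAxβ, hbβ']
    conv_lhs => rw [← hb']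
    rw [← Matrix.mulVec_add, ← Matrix.mulVec_sub]
    exact congrArg U.mulVec (funext fun i => by
      simp only [Pi.add_apply, Pi.sub_apply]; ring)
  have sqrt_add : ∀ X Y : ℝ, 0 ≤ X → 0 ≤ Y →
      Real.sqrt (X + Y) ≤ Real.sqrt X + Real.sqrt Y := by
    intro X Y hX hY
    rw [← Real.sqrt_sq (by positivity : (0:ℝ) ≤ Real.sqrt X + Real.sqrt Y)]
    apply Real.sqrt_le_sqrt
    nlinarith [Real.sq_sqrt hX, Real.sq_sqrt hY, Real.sqrt_nonneg X, Real.sqrt_nonneg Y]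
  rw [hmain, hbα', hbγ', dotU, dotU, dotU]
  set w : Fin M → ℝ := fun i => (σ i * σ i - 1) * (1 - pβ i) * c i
  set g : Fin M → ℝ := fun i => pγ i * c i
  set a : Fin M → ℝ := fun i => pα i * c i
  have hk : (0:ℝ) ≤ τ * (2 + τ) := by nlinarith
  have hG : (0:ℝ) ≤ g ⬝ᵥ g := by
    apply Finset.sum_nonneg; intro i _; exact mul_self_nonneg _
  have hAa : (0:ℝ) ≤ a ⬝ᵥ a := by
    apply Finset.sum_nonneg; intro i _; exact mul_self_nonneg _
  have hbound : w ⬝ᵥ w ≤ g ⬝ᵥ g + (τ * (2 + τ))^2 * (a ⬝ᵥ a) := by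
    simp only [dotProduct]
    rw [Finset.mul_sum, ← Finset.sum_add_distrib]
    apply Finset.sum_le_sum
    intro i _
    obtain ⟨hs0, hs1⟩ := hσ i
    simp only [w, g, a, hpα, hpβ, hpγ]
    rcases le_or_gt (σ i) τ with h1 | h1
    · have h2 : ¬ (τ < σ i ∧ σ i ≤ 1 - τ) := fun h => absurd h1 (not_le.mpr h.1)
      have h3 : ¬ (1 - τ < σ i) := by intro h; nlinarith
      simp only [if_pos h1, if_neg h2, if_neg h3, mul_one, one_mul, mul_zero, zero_mul,
        sub_zero, add_zero]
      nlinarith [mul_nonneg (mul_nonneg (mul_self_nonneg (c i)) (mul_nonneg hs0 hs0))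
        (by nlinarith : (0:ℝ) ≤ 2 - σ i * σ i)]
    · rcases le_or_gt (σ i) (1 - τ) with h2 | h2
      · have hβ : τ < σ i ∧ σ i ≤ 1 - τ := ⟨h1, h2⟩
        simp only [if_pos hβ]
        have e1 : (σ i * σ i - 1) * (1 - 1) * c i = 0 := by ring
        rw [e1]
        have t1 : (0:ℝ) ≤ (if σ i ≤ τ then (1:ℝ) else 0) * c i * ((if σ i ≤ τ then (1:ℝ) else 0) * c i) := mul_self_nonneg _
        have t2 : (0:ℝ) ≤ (if 1 - τ < σ i then (1:ℝ) else 0) * c i * ((if 1 - τ < σ i then (1:ℝ) else 0) * c i) := mul_self_nonneg _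
        nlinarith [sq_nonneg (τ * (2 + τ))]
      · have h3 : ¬ (σ i ≤ τ) := not_le.mpr (lt_trans (by linarith) h2)
        have h4 : ¬ (τ < σ i ∧ σ i ≤ 1 - τ) := fun h => absurd h2 (not_lt.mpr h.2)
        simp only [if_neg h3, if_neg h4, if_pos h2, mul_one, one_mul, mul_zero, zero_mul,
          sub_zero, add_zero, zero_add]
        have ha2 : 1 - σ i * σ i ≤ τ * (2 + τ) := by nlinarith
        have ha1 : 0 ≤ 1 - σ i * σ i := by nlinarith
        have key3 : 0 ≤ (τ * (2 + τ) - (1 - σ i * σ i)) * (τ * (2 + τ) + (1 - σ i * σ i)) * (c i * c i) :=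
          mul_nonneg (mul_nonneg (by linarith) (by linarith)) (mul_self_nonneg _)
        nlinarith [key3]
  calc Real.sqrt (w ⬝ᵥ w) ≤ Real.sqrt (g ⬝ᵥ g + (τ * (2 + τ))^2 * (a ⬝ᵥ a)) :=
        Real.sqrt_le_sqrt hbound
    _ ≤ Real.sqrt (g ⬝ᵥ g) + Real.sqrt ((τ * (2 + τ))^2 * (a ⬝ᵥ a)) :=
        sqrt_add _ _ hG (by positivity)
    _ = Real.sqrt (g ⬝ᵥ g) + τ * (2 + τ) * Real.sqrt (a ⬝ᵥ a) := by
        rw [Real.sqrt_mul (sq_nonneg _), Real.sqrt_sq hk]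
end
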